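/- For all positive integers i, j, k with i < j < k and i + j ≠ k, one has h_{i,j,k} = 2·h_{i+j+k} + h_i·h_j·h_k − h_{i+j}·h_k − h_{i+k}·h_j − h_{j+k}·h_i. -/

import Mathlib

open MvPolynomial

noncomputable section

/-- The total Pontryagin-class variable of the first factor: `p'_k`,
with `p'_0 = 1`.  Variables are indexed by positive integers `k`. -/
def pFst (k : ℕ) : MvPolynomial (ℕ ⊕ ℕ) ℚ := if k = 0 then 1 else X (Sum.inl k)

/-- `p''_k` for the second factor, with `p''_0 = 1`. -/
def pSnd (k : ℕ) : MvPolynomial (ℕ ⊕ ℕ) ℚ := if k = 0 then 1 else X (Sum.inr k)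

/-- The `k`-th Pontryagin class of a product, via the Whitney formula:
`p_k = ∑_{a+b=k} p'_a p''_b`. -/
def pProd (k : ℕ) : MvPolynomial (ℕ ⊕ ℕ) ℚ :=
  ∑ a ∈ Finset.range (k + 1), pFst a * pSnd (k - a)

/-- A multiplicative sequence of polynomials `L_n` in the variables
`p_1, p_2, …` (variable `k ≥ 1` of `MvPolynomial ℕ ℚ` stands for `p_k`;
variable `0` is unused): `L_0 = 1`, each `L_n` is homogeneous of weighted
degree `n` (where `p_k` has weight `k`), and the sequence satisfies
`L_n(p(ξ×η)) = ∑_{i+j=n} L_i(p(ξ)) L_j(p(η))`.  The Hirzebruch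
`L`-polynomials (associated to `√t/tanh √t`) form such a sequence. -/
def IsMultiplicativeSeq (L : ℕ → MvPolynomial ℕ ℚ) : Prop :=
  L 0 = 1 ∧
  (∀ n d, coeff d (L n) ≠ 0 → d 0 = 0) ∧
  (∀ n d, coeff d (L n) ≠ 0 → (d.sum fun k e => k * e) = n) ∧
  (∀ n, aeval pProd (L n) =
    ∑ i ∈ Finset.range (n + 1), aeval pFst (L i) * aeval pSnd (L (n - i)))

/-- `h_i`: the coefficient of `p_i` in `L_i`. -/
def h1 (L : ℕ → MvPolynomial ℕ ℚ) (i : ℕ) : ℚ :=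
  coeff (Finsupp.single i 1) (L i)

/-- `h_{i,j}`: the coefficient of `p_i p_j` in `L_{i+j}` (of `p_i²` in `L_{2i}` if `i = j`). -/
def h2 (L : ℕ → MvPolynomial ℕ ℚ) (i j : ℕ) : ℚ :=
  coeff (Finsupp.single i 1 + Finsupp.single j 1) (L (i + j))

/-- `h_{i,j,k}`: the coefficient of `p_i p_j p_k` in `L_{i+j+k}`. -/
def h3 (L : ℕ → MvPolynomial ℕ ℚ) (i j k : ℕ) : ℚ :=
  coeff (Finsupp.single i 1 + Finsupp.single j 1 + Finsupp.single k 1) (L (i + j + k))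

end

/-!
Evaluate the multiplicativity identity `L_n(p(ξ × η)) = ∑ L_a(p(ξ)) L_{n-a}(p(η))` on test
classes with `p'_i = x`, `p'_j = y`, `p''_k = z` and all other classes zero. The Whitney formula
then gives `p_i = x`, `p_j = y`, `p_k = z`, `p_{i+k} = xz`, `p_{j+k} = yz`, and comparing the
coefficients of `xyz` (on the right only `a = i + j` contributes, by homogeneity) yields
`h_{i,j,k} + h_{j,i+k} + h_{i,j+k} = h_{i,j} h_k`. The same computation with one class on each
factor yields `h_{s,t} + h_{s+t} = h_s h_t` for `s ≠ t`, and eliminating the `h_{s,t}` gives the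
formula.
-/

theorem Finsupp.eq_sum_single_of_support_subset {α M : Type*} [AddCommMonoid M] {f : α →₀ M}
    {s : Finset α} (h : f.support ⊆ s) : f = ∑ a ∈ s, Finsupp.single a (f a) :=
  f.sum_single.symm.trans (f.sum_of_support_subset h _ fun _ _ => Finsupp.single_zero _)

theorem Finsupp.weight_eq_sum_of_support_subset {σ M R : Type*} [Semiring R] [AddCommMonoid M]
    [Module R M] (w : σ → M) {f : σ →₀ R} {s : Finset σ} (h : f.support ⊆ s) :
    Finsupp.weight w f = ∑ i ∈ s, f i • w i :=
  f.sum_of_support_subset h _ fun _ _ => zero_smul _ _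

theorem coeff_add_mul_of_support_subset {R τ : Type*} [CommSemiring R]
    {F G : MvPolynomial τ R} {T : Set τ}
    (hF : ∀ v ∈ F.support, ↑v.support ⊆ T) (hG : ∀ w ∈ G.support, ↑w.support ⊆ Tᶜ)
    {u v : τ →₀ ℕ} (hu : ↑u.support ⊆ T) (hv : ↑v.support ⊆ Tᶜ) :
    coeff (u + v) (F * G) = coeff u F * coeff v G := by
  classical
  rw [coeff_mul, Finset.sum_eq_single (u, v)]
  · rintro ⟨a, b⟩ hab hne
    rw [Finset.HasAntidiagonal.mem_antidiagonal] at hab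
    by_cases ha : a ∈ F.support
    · by_cases hb : b ∈ G.support
      · refine absurd (Prod.ext (Finsupp.ext fun x => ?_) (Finsupp.ext fun x => ?_)) hne <;>
        · have hx := DFunLike.congr_fun hab x
          simp only [Finsupp.add_apply] at hx
          by_cases hxT : x ∈ T
          · have hbx : b x = 0 := Finsupp.notMem_support_iff.mp fun h => hG b hb h hxT
            have hvx : v x = 0 := Finsupp.notMem_support_iff.mp fun h => hv h hxT
            simp only; omega
          · have hax : a x = 0 := Finsupp.notMem_support_iff.mp fun h => hxT (hF a ha h)
            have hux : u x = 0 := Finsupp.notMem_support_iff.mp fun h => hxT (hu h)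
            simp only; omega
      · rw [notMem_support_iff.mp hb, mul_zero]
    · rw [notMem_support_iff.mp ha, zero_mul]
  · simp

section MonomialSubstitution

variable {R σ τ : Type*} [CommSemiring R] [DecidableEq σ]

noncomputable def monomialOn (S : Finset σ) (E : σ → τ →₀ ℕ) (m : σ) : MvPolynomial τ R :=
  if m ∈ S then monomial (E m) 1 else 0

theorem sum_range_monomialOn_mul {S₁ S₂ S : Finset ℕ} {E₁ E₂ E : ℕ → τ →₀ ℕ}
    (hS : ∀ m, m ∈ S ↔ ∃ a ∈ S₁, ∃ b ∈ S₂, a + b = m)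
    (hinj : ∀ a ∈ S₁, ∀ b ∈ S₂, ∀ a' ∈ S₁, ∀ b' ∈ S₂, a + b = a' + b' → a = a')
    (hE : ∀ a ∈ S₁, ∀ b ∈ S₂, E (a + b) = E₁ a + E₂ b) (m : ℕ) :
    ∑ a ∈ Finset.range (m + 1),
        (monomialOn S₁ E₁ a : MvPolynomial τ R) * monomialOn S₂ E₂ (m - a) =
      monomialOn S E m := by
  by_cases hm : m ∈ S
  · obtain ⟨a₀, ha₀, b₀, hb₀, rfl⟩ := (hS m).1 hm
    rw [Finset.sum_eq_single a₀]
    · simp [monomialOn, ha₀, hb₀, hm, hE a₀ ha₀ b₀ hb₀, monomial_mul]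
    · intro a ha hne
      rw [Finset.mem_range] at ha
      unfold monomialOn
      split_ifs with h₁ h₂
      · exact absurd (hinj a h₁ _ h₂ a₀ ha₀ b₀ hb₀ (by omega)) hne
      all_goals simp
    · simp
  · rw [monomialOn, if_neg hm]
    refine Finset.sum_eq_zero fun a ha => ?_
    rw [Finset.mem_range] at ha
    unfold monomialOn
    split_ifs with h₁ h₂
    · exact absurd ((hS m).2 ⟨a, h₁, m - a, h₂, by omega⟩) hm
    all_goals simp

variable (S : Finset σ) (E : σ → τ →₀ ℕ)

theorem aeval_monomialOn_monomial (d : σ →₀ ℕ) (c : R) :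
    aeval (monomialOn S E) (monomial d c) =
      if d.support ⊆ S then monomial (Finsupp.weight E d) c else 0 := by
  rw [aeval_monomial, algebraMap_eq, Finsupp.weight_apply, monomial_finsupp_sum_index]
  split_ifs with hS
  · refine congrArg _ (Finset.prod_congr rfl fun m hm => ?_)
    simp only [monomialOn, if_pos (hS hm), monomial_pow, one_pow]
  · obtain ⟨m, hm, hmS⟩ := Finset.not_subset.mp hS
    rw [Finsupp.prod, Finset.prod_eq_zero hm (by
      rw [monomialOn, if_neg hmS, zero_pow (Finsupp.mem_support_iff.mp hm)]), mul_zero]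

theorem coeff_aeval_monomialOn {P : MvPolynomial σ R} {u : τ →₀ ℕ} {D : Finset (σ →₀ ℕ)}
    (hD : ∀ d ∈ P.support, d.support ⊆ S ∧ Finsupp.weight E d = u ↔ d ∈ D) :
    coeff u (aeval (monomialOn S E) P) = ∑ d ∈ D, coeff d P := by
  classical
  conv_lhs => rw [P.as_sum, map_sum, coeff_sum]
  have hterm : ∀ d ∈ P.support, coeff u (aeval (monomialOn S E) (monomial d (coeff d P))) =
      if d ∈ D then coeff d P else 0 := fun d hd => by
    rw [aeval_monomialOn_monomial, if_congr (hD d hd).symm rfl rfl]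
    by_cases hS : d.support ⊆ S <;> by_cases hw : Finsupp.weight E d = u <;>
      simp [hS, hw, coeff_monomial]
  rw [Finset.sum_congr rfl hterm, Finset.sum_ite_mem]
  exact Finset.sum_subset Finset.inter_subset_right fun d hdD hd =>
    notMem_support_iff.mp fun h => hd (Finset.mem_inter.mpr ⟨h, hdD⟩)

theorem support_aeval_monomialOn_subset {T : Set τ} (hE : ∀ m, ↑(E m).support ⊆ T)
    (P : MvPolynomial σ R) :
    ∀ v ∈ (aeval (monomialOn S E : σ → MvPolynomial τ R) P).support, ↑v.support ⊆ T := by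
  intro v hv
  by_contra hvT
  obtain ⟨x, hxv, hxT⟩ := Set.not_subset.mp hvT
  refine mem_support_iff.mp hv (coeff_aeval_monomialOn S E (P := P) (D := ∅) fun d _ => ?_)
  refine iff_of_false (fun ⟨_, hw⟩ => Finsupp.mem_support_iff.mp hxv ?_) (Finset.notMem_empty d)
  rw [← hw, Finsupp.weight_apply, Finsupp.sum_apply]
  exact Finset.sum_eq_zero fun m _ => by
    simp [Finsupp.notMem_support_iff.mp fun h => hxT (hE m h)]

end MonomialSubstitution

section ExactCover

variable {R τ : Type*} [CommSemiring R]

theorem coeff_single_aeval_monomialOn {P : MvPolynomial ℕ R} (hP : ∀ d ∈ P.support, d 0 = 0)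
    (s : ℕ) (c : τ) :
    coeff (Finsupp.single c 1)
        (aeval (monomialOn {0, s} (Pi.single s (Finsupp.single c 1)) : ℕ → MvPolynomial τ R) P) =
      coeff (Finsupp.single s 1) P := by
  rw [coeff_aeval_monomialOn _ _ (D := {Finsupp.single s 1}), Finset.sum_singleton]
  intro d hd
  rw [Finset.subset_insert_iff_of_notMem (by simpa using hP d hd), Finset.mem_singleton]
  constructor
  · rintro ⟨hS, hw⟩
    rw [Finsupp.support_subset_singleton.mp hS] at hw ⊢
    simp only [Finsupp.weight_single, Pi.single_eq_same, Finsupp.smul_single, smul_eq_mul,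
      mul_one] at hw
    rw [Finsupp.single_injective c hw]
  · rintro rfl
    simp [Finsupp.weight_single]

theorem coeff_pair_aeval_monomialOn {P : MvPolynomial ℕ R} (hP : ∀ d ∈ P.support, d 0 = 0)
    {i j : ℕ} (hij : i ≠ j) {c₁ c₂ : τ} (hc : c₁ ≠ c₂) :
    coeff (Finsupp.single c₁ 1 + Finsupp.single c₂ 1)
        (aeval (monomialOn {0, i, j} (Pi.single i (Finsupp.single c₁ 1) +
          Pi.single j (Finsupp.single c₂ 1)) : ℕ → MvPolynomial τ R) P) =
      coeff (Finsupp.single i 1 + Finsupp.single j 1) P := by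
  rw [coeff_aeval_monomialOn _ _ (D := {Finsupp.single i 1 + Finsupp.single j 1}),
    Finset.sum_singleton]
  intro d hd
  rw [Finset.subset_insert_iff_of_notMem (by simpa using hP d hd), Finset.mem_singleton]
  constructor
  · rintro ⟨hS, hw⟩
    rw [Finsupp.weight_eq_sum_of_support_subset _ hS, Finset.sum_pair hij] at hw
    have h₁ := DFunLike.congr_fun hw c₁
    have h₂ := DFunLike.congr_fun hw c₂
    simp [hij, hij.symm, hc, hc.symm] at h₁ h₂
    rw [Finsupp.eq_sum_single_of_support_subset hS, Finset.sum_pair hij, h₁, h₂]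
  · rintro rfl
    refine ⟨Finsupp.support_add.trans ?_, ?_⟩
    · simp
    · simp [Finsupp.weight_single, hij, hij.symm]

theorem coeff_pair_aeval_monomialOn_add {P : MvPolynomial ℕ R} (hP : ∀ d ∈ P.support, d 0 = 0)
    {s t : ℕ} (hs : 0 < s) (hst : s < t) {c₁ c₂ : τ} (hc : c₁ ≠ c₂) :
    coeff (Finsupp.single c₁ 1 + Finsupp.single c₂ 1)
        (aeval (monomialOn {0, s, t, s + t} (Pi.single s (Finsupp.single c₁ 1) +
          Pi.single t (Finsupp.single c₂ 1) +
          Pi.single (s + t) (Finsupp.single c₁ 1 + Finsupp.single c₂ 1)) :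
          ℕ → MvPolynomial τ R) P) =
      coeff (Finsupp.single s 1 + Finsupp.single t 1) P + coeff (Finsupp.single (s + t) 1) P := by
  have hs0 : s ≠ 0 := by omega
  have ht0 : t ≠ 0 := by omega
  have hst' : s ≠ t := by omega
  have hne : Finsupp.single s 1 + Finsupp.single t 1 ≠ Finsupp.single (s + t) 1 := fun h => by
    simpa [Finsupp.single_apply, hst', ht0] using DFunLike.congr_fun h s
  refine (coeff_aeval_monomialOn _ _ fun d hd => ?_).trans (Finset.sum_pair hne)
  rw [Finset.subset_insert_iff_of_notMem (by simpa using hP d hd), Finset.mem_insert,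
    Finset.mem_singleton]
  constructor
  · rintro ⟨hS, hw⟩
    rw [Finsupp.weight_eq_sum_of_support_subset _ hS] at hw
    have hx := DFunLike.congr_fun hw c₁
    have hz := DFunLike.congr_fun hw c₂
    simp [Pi.single_apply, hs0, ht0, hst', hst'.symm, hc, hc.symm] at hx hz
    rw [Finsupp.eq_sum_single_of_support_subset hS]
    rcases (by omega : d s = 1 ∧ d t = 1 ∧ d (s + t) = 0 ∨ d s = 0 ∧ d t = 0 ∧ d (s + t) = 1)
      with ⟨h₁, h₂, h₃⟩ | ⟨h₁, h₂, h₃⟩ <;> simp [hs0, ht0, hst', h₁, h₂, h₃]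
  · rintro (rfl | rfl)
    · refine ⟨Finsupp.support_add.trans ?_, ?_⟩
      · simp
      · simp [Finsupp.weight_single, hs0, ht0, hst', hst'.symm]
    · simp [Finsupp.weight_single, hs0, ht0]

theorem support_subset_and_weight_eq_iff_of_triple {d : ℕ →₀ ℕ} (hd : d 0 = 0) {i j k : ℕ}
    (hi : 0 < i) (hij : i < j) (hjk : j < k) {c₁ c₂ c₃ : τ} (hc₁₂ : c₁ ≠ c₂) (hc₁₃ : c₁ ≠ c₃)
    (hc₂₃ : c₂ ≠ c₃) :
    d.support ⊆ {0, i, j, k, i + k, j + k} ∧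
        Finsupp.weight (Pi.single i (Finsupp.single c₁ 1) + Pi.single j (Finsupp.single c₂ 1) +
          Pi.single k (Finsupp.single c₃ 1) +
          Pi.single (i + k) (Finsupp.single c₁ 1 + Finsupp.single c₃ 1) +
          Pi.single (j + k) (Finsupp.single c₂ 1 + Finsupp.single c₃ 1) : ℕ → τ →₀ ℕ) d =
        Finsupp.single c₁ 1 + Finsupp.single c₂ 1 + Finsupp.single c₃ 1 ↔
      d = Finsupp.single i 1 + Finsupp.single j 1 + Finsupp.single k 1 ∨
        d = Finsupp.single j 1 + Finsupp.single (i + k) 1 ∨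
        d = Finsupp.single i 1 + Finsupp.single (j + k) 1 := by
  obtain ⟨hi0, hj0, hk0, hij', hik, hjk', hjik, hijk⟩ : i ≠ 0 ∧ j ≠ 0 ∧ k ≠ 0 ∧ i ≠ j ∧ i ≠ k ∧
      j ≠ k ∧ j ≠ i + k ∧ i ≠ j + k := by omega
  rw [Finset.subset_insert_iff_of_notMem (by simpa using hd)]
  constructor
  · rintro ⟨hS, hw⟩
    rw [Finsupp.weight_eq_sum_of_support_subset _ hS] at hw
    have hx := DFunLike.congr_fun hw c₁
    have hy := DFunLike.congr_fun hw c₂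
    have hz := DFunLike.congr_fun hw c₃
    simp [Pi.single_apply, hi0, hj0, hk0, hij', hik, hjk', hjik, hijk, hij'.symm, hik.symm,
      hjk'.symm, hjik.symm, hijk.symm, hc₁₂, hc₁₃, hc₂₃, hc₁₂.symm, hc₁₃.symm,
      hc₂₃.symm] at hx hy hz
    rw [Finsupp.eq_sum_single_of_support_subset hS]
    rcases (by omega : d i = 1 ∧ d j = 1 ∧ d k = 1 ∧ d (i + k) = 0 ∧ d (j + k) = 0 ∨
        d i = 0 ∧ d j = 1 ∧ d k = 0 ∧ d (i + k) = 1 ∧ d (j + k) = 0 ∨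
        d i = 1 ∧ d j = 0 ∧ d k = 0 ∧ d (i + k) = 0 ∧ d (j + k) = 1)
      with ⟨h₁, h₂, h₃, h₄, h₅⟩ | ⟨h₁, h₂, h₃, h₄, h₅⟩ | ⟨h₁, h₂, h₃, h₄, h₅⟩ <;>
    simp [hi0, hj0, hk0, hij', hik, hjk', hjik, hijk, h₁, h₂, h₃, h₄, h₅, add_assoc]
  · intro hD
    refine ⟨fun m hm => ?_, ?_⟩
    · contrapose! hm
      simp only [Finset.mem_insert, Finset.mem_singleton, not_or] at hm
      obtain ⟨h₁, h₂, h₃, h₄, h₅⟩ := hm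
      rcases hD with rfl | rfl | rfl <;>
      simp [Ne.symm h₁, Ne.symm h₂, Ne.symm h₃, Ne.symm h₄, Ne.symm h₅]
    · rcases hD with rfl | rfl | rfl <;>
      simp [Finsupp.weight_single, hi0, hj0, hk0, hij', hik, hjk', hjik, hijk, hij'.symm,
        hik.symm, hjk'.symm, hjik.symm, hijk.symm, add_comm, add_left_comm]

theorem coeff_triple_aeval_monomialOn_add {P : MvPolynomial ℕ R}
    (hP : ∀ d ∈ P.support, d 0 = 0) {i j k : ℕ} (hi : 0 < i) (hij : i < j) (hjk : j < k)
    {c₁ c₂ c₃ : τ} (hc₁₂ : c₁ ≠ c₂) (hc₁₃ : c₁ ≠ c₃) (hc₂₃ : c₂ ≠ c₃) :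
    coeff (Finsupp.single c₁ 1 + Finsupp.single c₂ 1 + Finsupp.single c₃ 1)
        (aeval (monomialOn {0, i, j, k, i + k, j + k} (Pi.single i (Finsupp.single c₁ 1) +
          Pi.single j (Finsupp.single c₂ 1) + Pi.single k (Finsupp.single c₃ 1) +
          Pi.single (i + k) (Finsupp.single c₁ 1 + Finsupp.single c₃ 1) +
          Pi.single (j + k) (Finsupp.single c₂ 1 + Finsupp.single c₃ 1)) :
          ℕ → MvPolynomial τ R) P) =
      coeff (Finsupp.single i 1 + Finsupp.single j 1 + Finsupp.single k 1) P +
        coeff (Finsupp.single j 1 + Finsupp.single (i + k) 1) P +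
        coeff (Finsupp.single i 1 + Finsupp.single (j + k) 1) P := by
  obtain ⟨hk0, hij', hik, hjk', hijk⟩ : k ≠ 0 ∧ i ≠ j ∧ i ≠ k ∧ j ≠ k ∧ i ≠ j + k := by omega
  have h₁₂ : Finsupp.single i 1 + Finsupp.single j 1 + Finsupp.single k 1 ≠
      Finsupp.single j 1 + Finsupp.single (i + k) 1 := fun h => by
    simpa [Finsupp.single_apply, hij', hik, hk0] using DFunLike.congr_fun h i
  have h₁₃ : Finsupp.single i 1 + Finsupp.single j 1 + Finsupp.single k 1 ≠
      Finsupp.single i 1 + Finsupp.single (j + k) 1 := fun h => by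
    simpa [Finsupp.single_apply, hij', hjk', hk0] using DFunLike.congr_fun h j
  have h₂₃ : Finsupp.single j 1 + Finsupp.single (i + k) 1 ≠
      Finsupp.single i 1 + Finsupp.single (j + k) 1 := fun h => by
    simpa [Finsupp.single_apply, hij', hik, hk0, hijk] using DFunLike.congr_fun h i
  rw [coeff_aeval_monomialOn _ _ (D := {Finsupp.single i 1 + Finsupp.single j 1 +
      Finsupp.single k 1, Finsupp.single j 1 + Finsupp.single (i + k) 1,
      Finsupp.single i 1 + Finsupp.single (j + k) 1}),
    Finset.sum_insert (by simp [h₁₂, h₁₃]), Finset.sum_pair h₂₃, ← add_assoc]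
  intro d hd
  rw [support_subset_and_weight_eq_iff_of_triple (hP d hd) hi hij hjk hc₁₂ hc₁₃ hc₂₃,
    Finset.mem_insert, Finset.mem_insert, Finset.mem_singleton]

end ExactCover

namespace IsMultiplicativeSeq

variable {L : ℕ → MvPolynomial ℕ ℚ}

theorem apply_zero_eq_zero (hL : IsMultiplicativeSeq L) {n : ℕ} {d : ℕ →₀ ℕ}
    (hd : d ∈ (L n).support) : d 0 = 0 :=
  hL.2.1 n d (mem_support_iff.mp hd)

theorem isWeightedHomogeneous (hL : IsMultiplicativeSeq L) (n : ℕ) :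
    IsWeightedHomogeneous id (L n) n := fun d hd => by
  rw [Finsupp.weight_apply, ← hL.2.2.1 n d hd]
  simp [mul_comm]

theorem sum_range_coeff_mul (hL : IsMultiplicativeSeq L) {d : ℕ →₀ ℕ} {w n : ℕ}
    (hw : Finsupp.weight id d = w) (hn : w ≤ n) (g : ℕ → ℚ) :
    ∑ a ∈ Finset.range (n + 1), coeff d (L a) * g a = coeff d (L w) * g w := by
  refine Finset.sum_eq_single_of_mem _ (Finset.mem_range.mpr (by omega)) fun a _ ha => ?_
  rw [(hL.isWeightedHomogeneous a).coeff_eq_zero d (hw ▸ Ne.symm ha), zero_mul]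

theorem aeval_convolution (hL : IsMultiplicativeSeq L) {A : Type*} [CommSemiring A]
    [Algebra ℚ A] {x y : ℕ → A} (hx : x 0 = 1) (hy : y 0 = 1) (n : ℕ) :
    aeval (fun m => ∑ a ∈ Finset.range (m + 1), x a * y (m - a)) (L n) =
      ∑ a ∈ Finset.range (n + 1), aeval x (L a) * aeval y (L (n - a)) := by
  have hFst : ∀ a, aeval (Sum.elim x y) (pFst a) = x a := fun a => by
    unfold pFst; split_ifs with h <;> simp [h, hx]
  have hSnd : ∀ b, aeval (Sum.elim x y) (pSnd b) = y b := fun b => by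
    unfold pSnd; split_ifs with h <;> simp [h, hy]
  simpa only [map_sum, map_mul, comp_aeval_apply, pProd, hFst, hSnd] using
    congrArg (aeval (Sum.elim x y)) (hL.2.2.2 n)

theorem h2_add_h1 (hL : IsMultiplicativeSeq L) {s t : ℕ} (hs : 0 < s) (hst : s < t) :
    h2 L s t + h1 L (s + t) = h1 L s * h1 L t := by
  obtain ⟨hs0, ht0, hst'⟩ : s ≠ 0 ∧ t ≠ 0 ∧ s ≠ t := by omega
  set e₀ : Fin 2 →₀ ℕ := Finsupp.single 0 1
  set e₁ : Fin 2 →₀ ℕ := Finsupp.single 1 1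
  set x : ℕ → MvPolynomial (Fin 2) ℚ := monomialOn {0, s} (Pi.single s e₀)
  set y : ℕ → MvPolynomial (Fin 2) ℚ := monomialOn {0, t} (Pi.single t e₁)
  have hconv : (fun m => ∑ a ∈ Finset.range (m + 1), x a * y (m - a)) =
      monomialOn {0, s, t, s + t} (Pi.single s e₀ + Pi.single t e₁ + Pi.single (s + t) (e₀ + e₁)) :=
    funext <| sum_range_monomialOn_mul (fun m => by simp; omega) (by simp; omega)
      (by simp [hs0, ht0, hst', hst'.symm])
  have key := congrArg (coeff (e₀ + e₁)) (hL.aeval_convolution (x := x) (y := y)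
    (by simp [x, monomialOn, hs0.symm]) (by simp [y, monomialOn, ht0.symm]) (s + t))
  rw [hconv, coeff_pair_aeval_monomialOn_add (fun _ => hL.apply_zero_eq_zero) hs hst
    (by decide), coeff_sum] at key
  have hxT : ∀ m, ↑((Pi.single s e₀ : ℕ → Fin 2 →₀ ℕ) m).support ⊆ ({0} : Set (Fin 2)) := by
    intro m
    rw [Pi.single_apply]; split_ifs <;> simp [e₀]
  have hyT : ∀ m, ↑((Pi.single t e₁ : ℕ → Fin 2 →₀ ℕ) m).support ⊆ ({0} : Set (Fin 2))ᶜ := by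
    intro m
    rw [Pi.single_apply]; split_ifs <;> simp [e₁]
  have hprod : ∀ a, coeff (e₀ + e₁) (aeval x (L a) * aeval y (L (s + t - a))) =
      coeff (Finsupp.single s 1) (L a) * coeff (Finsupp.single t 1) (L (s + t - a)) := fun a => by
    rw [coeff_add_mul_of_support_subset (support_aeval_monomialOn_subset _ _ hxT _)
        (support_aeval_monomialOn_subset _ _ hyT _) (by simp [e₀]) (by simp [e₁]),
      coeff_single_aeval_monomialOn (fun _ => hL.apply_zero_eq_zero),
      coeff_single_aeval_monomialOn (fun _ => hL.apply_zero_eq_zero)]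
  rw [Finset.sum_congr rfl fun a _ => hprod a,
    hL.sum_range_coeff_mul (w := s) (by simp [Finsupp.weight_single]) (by omega),
    Nat.add_sub_cancel_left] at key
  exact key

theorem h3_add_h2_add_h2 (hL : IsMultiplicativeSeq L) {i j k : ℕ} (hi : 0 < i) (hij : i < j)
    (hjk : j < k) :
    h3 L i j k + h2 L j (i + k) + h2 L i (j + k) = h2 L i j * h1 L k := by
  obtain ⟨hi0, hj0, hk0, hij', hik, hjk', hjik, hijk⟩ : i ≠ 0 ∧ j ≠ 0 ∧ k ≠ 0 ∧ i ≠ j ∧ i ≠ k ∧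
      j ≠ k ∧ j ≠ i + k ∧ i ≠ j + k := by omega
  set e₀ : Fin 3 →₀ ℕ := Finsupp.single 0 1
  set e₁ : Fin 3 →₀ ℕ := Finsupp.single 1 1
  set e₂ : Fin 3 →₀ ℕ := Finsupp.single 2 1
  set x : ℕ → MvPolynomial (Fin 3) ℚ := monomialOn {0, i, j} (Pi.single i e₀ + Pi.single j e₁)
  set y : ℕ → MvPolynomial (Fin 3) ℚ := monomialOn {0, k} (Pi.single k e₂)
  have hconv : (fun m => ∑ a ∈ Finset.range (m + 1), x a * y (m - a)) =
      monomialOn {0, i, j, k, i + k, j + k} (Pi.single i e₀ + Pi.single j e₁ + Pi.single k e₂ +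
        Pi.single (i + k) (e₀ + e₂) + Pi.single (j + k) (e₁ + e₂)) :=
    funext <| sum_range_monomialOn_mul (fun m => by simp; omega) (by simp; omega)
      (by simp [hi0, hj0, hk0, hij', hik, hjk', hjik, hijk, hij'.symm, hik.symm, hjk'.symm,
        hjik.symm, hijk.symm])
  have key := congrArg (coeff (e₀ + e₁ + e₂)) (hL.aeval_convolution (x := x) (y := y)
    (by simp [x, monomialOn, hi0.symm, hj0.symm]) (by simp [y, monomialOn, hk0.symm]) (i + j + k))
  rw [hconv, coeff_triple_aeval_monomialOn_add (fun _ => hL.apply_zero_eq_zero) hi hij hjk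
    (by decide) (by decide) (by decide), coeff_sum] at key
  have hxT : ∀ m, ↑((Pi.single i e₀ + Pi.single j e₁ : ℕ → Fin 3 →₀ ℕ) m).support ⊆
      ({0, 1} : Set (Fin 3)) := by
    intro m
    simp only [Pi.add_apply, Pi.single_apply]
    split_ifs <;> simp [e₀, e₁, Finsupp.support_single_add_single]
  have hyT : ∀ m, ↑((Pi.single k e₂ : ℕ → Fin 3 →₀ ℕ) m).support ⊆ ({0, 1} : Set (Fin 3))ᶜ := by
    intro m
    rw [Pi.single_apply]; split_ifs <;> simp [e₂]
  have hprod : ∀ a, coeff (e₀ + e₁ + e₂) (aeval x (L a) * aeval y (L (i + j + k - a))) =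
      coeff (Finsupp.single i 1 + Finsupp.single j 1) (L a) *
        coeff (Finsupp.single k 1) (L (i + j + k - a)) := fun a => by
    rw [coeff_add_mul_of_support_subset (support_aeval_monomialOn_subset _ _ hxT _)
        (support_aeval_monomialOn_subset _ _ hyT _)
        (by simp [e₀, e₁, Finsupp.support_single_add_single]) (by simp [e₂]),
      coeff_pair_aeval_monomialOn (fun _ => hL.apply_zero_eq_zero) hij' (by decide),
      coeff_single_aeval_monomialOn (fun _ => hL.apply_zero_eq_zero)]
  rw [Finset.sum_congr rfl fun a _ => hprod a,
    hL.sum_range_coeff_mul (w := i + j) (by simp [Finsupp.weight_single]) (by omega),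
    Nat.add_sub_cancel_left] at key
  rw [h2, h2, show j + (i + k) = i + j + k by omega, show i + (j + k) = i + j + k by omega]
  exact key

end IsMultiplicativeSeq

theorem h3_formula_general (L : ℕ → MvPolynomial ℕ ℚ) (hL : IsMultiplicativeSeq L)
    (i j k : ℕ) (hi : 0 < i) (hij : i < j) (hjk : j < k) :
    h3 L i j k = 2 * h1 L (i + j + k) + h1 L i * h1 L j * h1 L k -
      h1 L (i + j) * h1 L k - h1 L (i + k) * h1 L j - h1 L (j + k) * h1 L i := by
  have hA := hL.h3_add_h2_add_h2 hi hij hjk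
  have hB := hL.h2_add_h1 hi hij
  have hB₁ := hL.h2_add_h1 (s := j) (t := i + k) (by omega) (by omega)
  have hB₂ := hL.h2_add_h1 (s := i) (t := j + k) hi (by omega)
  rw [show j + (i + k) = i + j + k by omega] at hB₁
  rw [show i + (j + k) = i + j + k by omega] at hB₂
  linear_combination hA + h1 L k * hB - hB₁ - hB₂

/-- For positive integers `i < j < k` with `i + j ≠ k`, the coefficients of the
Hirzebruch `L`-polynomials (or of any multiplicative sequence) satisfy
`h_{i,j,k} = 2·h_{i+j+k} + h_i h_j h_k − h_{i+j} h_k − h_{i+k} h_j − h_{j+k} h_i`. -/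
theorem h3_formula (L : ℕ → MvPolynomial ℕ ℚ) (hL : IsMultiplicativeSeq L)
    (i j k : ℕ) (hi : 0 < i) (hij : i < j) (hjk : j < k) (hsum : i + j ≠ k) :
    h3 L i j k = 2 * h1 L (i + j + k) + h1 L i * h1 L j * h1 L k -
      h1 L (i + j) * h1 L k - h1 L (i + k) * h1 L j - h1 L (j + k) * h1 L i :=
  h3_formula_general L hL i j k hi hij hjk
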